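/- Fix α ∈ ℝ. (a) Every ℝ-linear map Q : V_α → ℝ with Q(1) = 1 and Q({f, g}) = 0 for all f, g ∈ V_α satisfies Q(ℓ) = −α. (b) There exists such a map Q; it can moreover be chosen with Q(sin θ) = Q(cos θ) = 0 and Q(bℓ + c) = c − αb for all b, c ∈ ℝ. -/

import Mathlib

noncomputable section

open Complex

/-- Partial derivative in the first (angle) variable. -/
def pdTheta (f : ℝ × ℝ → ℝ) : ℝ × ℝ → ℝ := fun p => deriv (fun t => f (t, p.2)) p.1

/-- Partial derivative in the second (momentum) variable. -/
def pdEll (f : ℝ × ℝ → ℝ) : ℝ × ℝ → ℝ := fun p => deriv (fun l => f (p.1, l)) p.2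

/-- Poisson bracket `{f,g} = f_ℓ g_θ − f_θ g_ℓ`. -/
def pb (f g : ℝ × ℝ → ℝ) : ℝ × ℝ → ℝ :=
  fun p => pdEll f p * pdTheta g p - pdTheta f p * pdEll g p

/-- Spanning set for the polynomial algebra `P`. -/
def PGens : Set (ℝ × ℝ → ℝ) :=
  {h | ∃ r m : ℕ, h = (fun p : ℝ × ℝ => p.2 ^ r * Real.sin (m * p.1)) ∨
       h = (fun p : ℝ × ℝ => p.2 ^ r * Real.cos (m * p.1))}

/-- The polynomial algebra `P`. -/
def P : Submodule ℝ (ℝ × ℝ → ℝ) := Submodule.span ℝ PGens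

def fone : ℝ × ℝ → ℝ := fun _ => 1
def fell : ℝ × ℝ → ℝ := fun p => p.2
def fsin : ℝ × ℝ → ℝ := fun p => Real.sin p.1
def fcos : ℝ × ℝ → ℝ := fun p => Real.cos p.1

lemma fone_mem_P : fone ∈ P :=
  Submodule.subset_span ⟨0, 0, Or.inr (by funext p; simp [fone])⟩

lemma fell_mem_P : fell ∈ P :=
  Submodule.subset_span ⟨1, 0, Or.inr (by funext p; simp [fell])⟩

lemma fsin_mem_P : fsin ∈ P :=
  Submodule.subset_span ⟨0, 1, Or.inl (by funext p; simp [fsin])⟩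

lemma fcos_mem_P : fcos ∈ P :=
  Submodule.subset_span ⟨0, 1, Or.inr (by funext p; simp [fcos])⟩

/-- The domain `D = C^∞(S¹,ℂ)`: smooth `2π`-periodic functions. -/
def Dom : Submodule ℂ (ℝ → ℂ) where
  carrier := {ψ | ContDiff ℝ (⊤ : ℕ∞) ψ ∧ ∀ t, ψ (t + 2 * Real.pi) = ψ t}
  add_mem' := by
    intro a b ha hb
    exact ⟨ha.1.add hb.1, fun t => by simp [Pi.add_apply, ha.2 t, hb.2 t]⟩
  zero_mem' := ⟨contDiff_const, fun t => rfl⟩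
  smul_mem' := by
    intro c a ha
    exact ⟨ha.1.const_smul c, fun t => by simp [Pi.smul_apply, ha.2 t]⟩

/-- The `L²` inner product on `D`. -/
def ip (φ ψ : ℝ → ℂ) : ℂ := ∫ t in (0:ℝ)..(2 * Real.pi), (starRingEnd ℂ) (φ t) * ψ t

/-- Symmetric operator on `D`. -/
def SymmetricOp (A : Dom →ₗ[ℂ] Dom) : Prop :=
  ∀ φ ψ : Dom, ip (A φ : ℝ → ℂ) (ψ : ℝ → ℂ) = ip (φ : ℝ → ℂ) (A ψ : ℝ → ℂ)

/-- An admissible quantization of type (i)′ with parameter ν of a Lie subalgebra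
`O ⊆ P` containing the basic set. -/
structure IsQuant (O : Submodule ℝ (ℝ × ℝ → ℝ)) (ν : ℝ)
    (Q : O →ₗ[ℝ] (Dom →ₗ[ℂ] Dom)) : Prop where
  map_bracket : ∀ (f g : O) (h : pb f g ∈ O),
    Q ⟨pb f g, h⟩ = Complex.I • (Q f ∘ₗ Q g - Q g ∘ₗ Q f)
  map_one : ∀ h : fone ∈ O, Q ⟨fone, h⟩ = LinearMap.id
  symm : ∀ f : O, SymmetricOp (Q f)
  map_ell : ∀ (h : fell ∈ O) (ψ : Dom) (t : ℝ),
    (Q ⟨fell, h⟩ ψ : ℝ → ℂ) t = -Complex.I * deriv (ψ : ℝ → ℂ) t + (ν : ℂ) * (ψ : ℝ → ℂ) t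
  map_sin : ∀ (h : fsin ∈ O) (ψ : Dom) (t : ℝ),
    (Q ⟨fsin, h⟩ ψ : ℝ → ℂ) t = (Real.sin t : ℂ) * (ψ : ℝ → ℂ) t
  map_cos : ∀ (h : fcos ∈ O) (ψ : Dom) (t : ℝ),
    (Q ⟨fcos, h⟩ ψ : ℝ → ℂ) t = (Real.cos t : ℂ) * (ψ : ℝ → ℂ) t

end
noncomputable section
/-- Partial θ-derivative of a complex-valued function. -/
def pdThetaC (f : ℝ × ℝ → ℂ) : ℝ × ℝ → ℂ := fun p => deriv (fun t => f (t, p.2)) p.1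
/-- Partial ℓ-derivative of a complex-valued function. -/
def pdEllC (f : ℝ × ℝ → ℂ) : ℝ × ℝ → ℂ := fun p => deriv (fun l => f (p.1, l)) p.2
/-- Poisson bracket of complex-valued functions. -/
def pbC (f g : ℝ × ℝ → ℂ) : ℝ × ℝ → ℂ :=
  fun p => pdEllC f p * pdThetaC g p - pdThetaC f p * pdEllC g p

/-- `e^r_m = ℓ^r e^{imθ}`. -/
def eC (r : ℕ) (m : ℤ) : ℝ × ℝ → ℂ :=
  fun p => (p.2 : ℂ) ^ r * Complex.exp (Complex.I * (m : ℂ) * (p.1 : ℂ))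

/-- The complexification `P_ℂ` of `P`. -/
def PC : Submodule ℂ (ℝ × ℝ → ℂ) :=
  Submodule.span ℂ {h | ∃ (r : ℕ) (m : ℤ), h = eC r m}

/-- Closure under the Poisson bracket (complex case). -/
def IsLieSubC (S : Submodule ℂ (ℝ × ℝ → ℂ)) : Prop :=
  ∀ f g : ℝ × ℝ → ℂ, f ∈ S → g ∈ S → pbC f g ∈ S

/-- The generators of `W_α`: `1, e^0_1, e^0_{−1}, e^1_0` and
`e^2_{2N+1} + 2α e^1_{2N+1}` for all `N ∈ ℤ`. -/
def WGens (α : ℝ) : Set (ℝ × ℝ → ℂ) :=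
  {fun _ => 1, eC 0 1, eC 0 (-1), eC 1 0} ∪
    {h | ∃ N : ℤ, h = eC 2 (2 * N + 1) + (2 * α : ℂ) • eC 1 (2 * N + 1)}

/-- `W_α`: the smallest complex Lie subalgebra of `P_ℂ` containing the generators. -/
def W (α : ℝ) : Submodule ℂ (ℝ × ℝ → ℂ) :=
  sInf {S | S ≤ PC ∧ WGens α ⊆ S ∧ IsLieSubC S}

/-- The complexification of a real-valued function. -/
def cplx (f : ℝ × ℝ → ℝ) : ℝ × ℝ → ℂ := fun p => (f p : ℂ)

/-- `V_α`: the real elements of `W_α`, a real Lie subalgebra of `P`. -/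
def V (α : ℝ) : Submodule ℝ (ℝ × ℝ → ℝ) where
  carrier := {f | cplx f ∈ W α}
  add_mem' := by
    intro a b ha hb
    simp only [Set.mem_setOf_eq] at *
    have h : cplx (a + b) = cplx a + cplx b := by
      funext p; simp [cplx]
    rw [h]; exact add_mem ha hb
  zero_mem' := by
    simp only [Set.mem_setOf_eq]
    have h : cplx (0 : ℝ × ℝ → ℝ) = 0 := by funext p; simp [cplx]
    rw [h]; exact zero_mem _
  smul_mem' := by
    intro c a ha
    simp only [Set.mem_setOf_eq] at *
    have h : cplx (c • a) = (c : ℂ) • cplx a := by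
      funext p; simp [cplx]
    rw [h]; exact Submodule.smul_mem _ _ ha
end
noncomputable section
lemma mem_W_of_mem_WGens {α : ℝ} {f : ℝ × ℝ → ℂ} (hf : f ∈ WGens α) : f ∈ W α := by
  rw [W, Submodule.mem_sInf]
  exact fun S hS => hS.2.1 hf

lemma fone_mem_V (α : ℝ) : fone ∈ V α := by
  show cplx fone ∈ W α
  have h : cplx fone = fun _ => (1 : ℂ) := by funext p; simp [cplx, fone]
  rw [h]
  exact mem_W_of_mem_WGens (Or.inl (by simp))

lemma fell_mem_V (α : ℝ) : fell ∈ V α := by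
  show cplx fell ∈ W α
  have h : cplx fell = eC 1 0 := by
    funext p; simp [cplx, fell, eC]
  rw [h]
  exact mem_W_of_mem_WGens (Or.inl (by simp [WGens]))

lemma fsin_mem_V (α : ℝ) : fsin ∈ V α := by
  show cplx fsin ∈ W α
  have h : cplx fsin = (Complex.I / 2) • eC 0 (-1) - (Complex.I / 2) • eC 0 1 := by
    funext p
    have h1 : Complex.I * (((1 : ℤ) : ℂ)) * (p.1 : ℂ) = (p.1 : ℂ) * Complex.I := by
      push_cast; ring
    have h2 : Complex.I * (((-1 : ℤ) : ℂ)) * (p.1 : ℂ) = -(p.1 : ℂ) * Complex.I := by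
      push_cast; ring
    simp only [cplx, fsin, eC, Pi.sub_apply, Pi.smul_apply, smul_eq_mul, pow_zero, one_mul,
      h1, h2, Complex.ofReal_sin]
    rw [Complex.sin]
    ring
  rw [h]
  exact sub_mem
    (Submodule.smul_mem _ _ (mem_W_of_mem_WGens (Or.inl (by simp [WGens]))))
    (Submodule.smul_mem _ _ (mem_W_of_mem_WGens (Or.inl (by simp [WGens]))))

lemma fcos_mem_V (α : ℝ) : fcos ∈ V α := by
  show cplx fcos ∈ W α
  have h : cplx fcos = ((1 : ℂ) / 2) • eC 0 1 + ((1 : ℂ) / 2) • eC 0 (-1) := by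
    funext p
    have h1 : Complex.I * (((1 : ℤ) : ℂ)) * (p.1 : ℂ) = (p.1 : ℂ) * Complex.I := by
      push_cast; ring
    have h2 : Complex.I * (((-1 : ℤ) : ℂ)) * (p.1 : ℂ) = -(p.1 : ℂ) * Complex.I := by
      push_cast; ring
    simp only [cplx, fcos, eC, Pi.add_apply, Pi.smul_apply, smul_eq_mul, pow_zero, one_mul,
      h1, h2, Complex.ofReal_cos]
    rw [Complex.cos]
    ring
  rw [h]
  exact add_mem
    (Submodule.smul_mem _ _ (mem_W_of_mem_WGens (Or.inl (by simp [WGens]))))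
    (Submodule.smul_mem _ _ (mem_W_of_mem_WGens (Or.inl (by simp [WGens]))))
end
noncomputable section
lemma deriv_ofReal_comp' (h : ℝ → ℝ) (x : ℝ) :
    deriv (fun t => ((h t : ℝ) : ℂ)) x = ((deriv h x : ℝ) : ℂ) := by
  by_cases hd : DifferentiableAt ℝ h x
  · exact (hd.hasDerivAt.ofReal_comp).deriv
  · rw [deriv_zero_of_not_differentiableAt hd, deriv_zero_of_not_differentiableAt]
    · simp
    · intro hc
      apply hd
      have heq : h = fun t => ((fun s => ((h s : ℝ) : ℂ)) t).re := by
        funext t; simp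
      rw [heq]
      exact Complex.reCLM.differentiableAt.comp x hc

lemma pdThetaC_cplx (f : ℝ × ℝ → ℝ) (p : ℝ × ℝ) :
    pdThetaC (cplx f) p = ((pdTheta f p : ℝ) : ℂ) := by
  simp only [pdThetaC, pdTheta, cplx]
  exact deriv_ofReal_comp' (fun t => f (t, p.2)) p.1

lemma pdEllC_cplx (f : ℝ × ℝ → ℝ) (p : ℝ × ℝ) :
    pdEllC (cplx f) p = ((pdEll f p : ℝ) : ℂ) := by
  simp only [pdEllC, pdEll, cplx]
  exact deriv_ofReal_comp' (fun l => f (p.1, l)) p.2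

lemma pbC_cplx (f g : ℝ × ℝ → ℝ) : cplx (pb f g) = pbC (cplx f) (cplx g) := by
  funext p
  simp only [cplx, pb, pbC, pdThetaC_cplx, pdEllC_cplx]
  push_cast
  ring

lemma hasDerivAt_ofReal (x : ℝ) : HasDerivAt (fun t : ℝ => (t : ℂ)) 1 x := by
  simpa using (hasDerivAt_id x).ofReal_comp

lemma hasDerivAt_eC_theta (r : ℕ) (m : ℤ) (p : ℝ × ℝ) :
    HasDerivAt (fun t : ℝ => eC r m (t, p.2)) (Complex.I * m * eC r m p) p.1 := by
  have h2 : HasDerivAt (fun t : ℝ => Complex.I * (m : ℂ) * (t : ℂ)) (Complex.I * m) p.1 := by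
    simpa using (hasDerivAt_ofReal p.1).const_mul (Complex.I * (m : ℂ))
  have h4 := h2.cexp.const_mul ((p.2 : ℂ) ^ r)
  convert h4 using 1
  · rfl
  · rfl
  simp [eC]; ring

lemma hasDerivAt_eC_ell (r : ℕ) (m : ℤ) (p : ℝ × ℝ) :
    HasDerivAt (fun l : ℝ => eC r m (p.1, l))
      ((r : ℂ) * (p.2 : ℂ) ^ (r - 1) * Complex.exp (Complex.I * m * p.1)) p.2 := by
  have h1 : HasDerivAt (fun l : ℝ => ((l : ℂ)) ^ r) ((r : ℂ) * (p.2 : ℂ) ^ (r - 1)) p.2 :=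
    (hasDerivAt_pow r ((p.2 : ℝ) : ℂ)).comp_ofReal
  exact h1.mul_const (Complex.exp (Complex.I * m * p.1))

lemma pdThetaC_eC (r : ℕ) (m : ℤ) (p : ℝ × ℝ) :
    pdThetaC (eC r m) p = Complex.I * m * eC r m p :=
  (hasDerivAt_eC_theta r m p).deriv

lemma pdEllC_eC (r : ℕ) (m : ℤ) (p : ℝ × ℝ) :
    pdEllC (eC r m) p = (r : ℂ) * (p.2 : ℂ) ^ (r - 1) * Complex.exp (Complex.I * m * p.1) :=
  (hasDerivAt_eC_ell r m p).deriv

lemma pbC_eC (r s : ℕ) (m n : ℤ) :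
    pbC (eC r m) (eC s n) =
      (Complex.I * ((r : ℂ) * n - (m : ℂ) * s)) • eC (r + s - 1) (m + n) := by
  funext p
  simp only [pbC, pdThetaC_eC, pdEllC_eC, Pi.smul_apply, smul_eq_mul, eC]
  rw [show Complex.I * ((m + n : ℤ) : ℂ) * (p.1 : ℂ)
      = Complex.I * (m : ℂ) * (p.1 : ℂ) + Complex.I * (n : ℂ) * (p.1 : ℂ) from by
        push_cast; ring, Complex.exp_add]
  rcases Nat.eq_zero_or_pos r with hr | hr
  · rcases Nat.eq_zero_or_pos s with hs | hs
    · subst hr; subst hs; simp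
    · obtain ⟨s', rfl⟩ : ∃ s', s = s' + 1 := ⟨s - 1, by omega⟩
      subst hr
      have h1 : (0 : ℕ) + (s' + 1) - 1 = s' := by omega
      rw [h1]
      simp only [Nat.add_sub_cancel, pow_zero, Nat.cast_zero]
      push_cast
      ring
  · obtain ⟨r', rfl⟩ : ∃ r', r = r' + 1 := ⟨r - 1, by omega⟩
    rcases Nat.eq_zero_or_pos s with hs | hs
    · subst hs
      have h1 : r' + 1 + 0 - 1 = r' := by omega
      rw [h1]
      simp only [Nat.add_sub_cancel, pow_zero, Nat.cast_zero]
      push_cast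
      ring
    · obtain ⟨s', rfl⟩ : ∃ s', s = s' + 1 := ⟨s - 1, by omega⟩
      have h1 : r' + 1 + (s' + 1) - 1 = r' + s' + 1 := by omega
      rw [h1]
      simp only [Nat.add_sub_cancel]
      push_cast
      ring

/-- Both partial slices are differentiable at every point. -/
def DiffS (f : ℝ × ℝ → ℂ) : Prop :=
  ∀ p : ℝ × ℝ, DifferentiableAt ℝ (fun t => f (t, p.2)) p.1 ∧
    DifferentiableAt ℝ (fun l => f (p.1, l)) p.2

lemma diffS_eC (r : ℕ) (m : ℤ) : DiffS (eC r m) := fun p =>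
  ⟨(hasDerivAt_eC_theta r m p).differentiableAt, (hasDerivAt_eC_ell r m p).differentiableAt⟩

lemma diffS_zero : DiffS (0 : ℝ × ℝ → ℂ) := fun p =>
  ⟨differentiableAt_const _, differentiableAt_const _⟩

lemma diffS_add {f g : ℝ × ℝ → ℂ} (hf : DiffS f) (hg : DiffS g) : DiffS (f + g) := fun p =>
  ⟨((hf p).1).add ((hg p).1), ((hf p).2).add ((hg p).2)⟩

lemma diffS_smul (c : ℂ) {f : ℝ × ℝ → ℂ} (hf : DiffS f) : DiffS (c • f) := fun p =>
  ⟨((hf p).1).const_smul c, ((hf p).2).const_smul c⟩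

lemma diffS_of_mem_PC {f : ℝ × ℝ → ℂ} (hf : f ∈ PC) : DiffS f := by
  induction hf using Submodule.span_induction with
  | mem x hx => obtain ⟨r, m, rfl⟩ := hx; exact diffS_eC r m
  | zero => exact diffS_zero
  | add x y hx hy ihx ihy => exact diffS_add ihx ihy
  | smul c x hx ihx => exact diffS_smul c ihx

lemma pdThetaC_add {f g : ℝ × ℝ → ℂ} (hf : DiffS f) (hg : DiffS g) (p : ℝ × ℝ) :
    pdThetaC (f + g) p = pdThetaC f p + pdThetaC g p := by
  simp only [pdThetaC, Pi.add_apply]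
  exact deriv_add ((hf p).1) ((hg p).1)

lemma pdEllC_add {f g : ℝ × ℝ → ℂ} (hf : DiffS f) (hg : DiffS g) (p : ℝ × ℝ) :
    pdEllC (f + g) p = pdEllC f p + pdEllC g p := by
  simp only [pdEllC, Pi.add_apply]
  exact deriv_add ((hf p).2) ((hg p).2)

lemma pdThetaC_smul (c : ℂ) (f : ℝ × ℝ → ℂ) (p : ℝ × ℝ) :
    pdThetaC (c • f) p = c * pdThetaC f p := by
  simp only [pdThetaC, Pi.smul_apply, smul_eq_mul]
  rw [show (fun t => c * f (t, p.2)) = fun t => c • f (t, p.2) from rfl, deriv_fun_const_smul_field]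
  simp

lemma pdEllC_smul (c : ℂ) (f : ℝ × ℝ → ℂ) (p : ℝ × ℝ) :
    pdEllC (c • f) p = c * pdEllC f p := by
  simp only [pdEllC, Pi.smul_apply, smul_eq_mul]
  rw [show (fun l => c * f (p.1, l)) = fun l => c • f (p.1, l) from rfl, deriv_fun_const_smul_field]
  simp

lemma pdThetaC_zero (p : ℝ × ℝ) : pdThetaC (0 : ℝ × ℝ → ℂ) p = 0 := by
  simp [pdThetaC]

lemma pdEllC_zero (p : ℝ × ℝ) : pdEllC (0 : ℝ × ℝ → ℂ) p = 0 := by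
  simp [pdEllC]

lemma pbC_add_left {f f' : ℝ × ℝ → ℂ} (g : ℝ × ℝ → ℂ) (hf : DiffS f) (hf' : DiffS f') :
    pbC (f + f') g = pbC f g + pbC f' g := by
  funext p
  simp only [pbC, Pi.add_apply, pdThetaC_add hf hf', pdEllC_add hf hf']
  ring

lemma pbC_add_right (f : ℝ × ℝ → ℂ) {g g' : ℝ × ℝ → ℂ} (hg : DiffS g) (hg' : DiffS g') :
    pbC f (g + g') = pbC f g + pbC f g' := by
  funext p
  simp only [pbC, Pi.add_apply, pdThetaC_add hg hg', pdEllC_add hg hg']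
  ring

lemma pbC_smul_left (c : ℂ) (f g : ℝ × ℝ → ℂ) : pbC (c • f) g = c • pbC f g := by
  funext p
  simp only [pbC, Pi.smul_apply, smul_eq_mul, pdThetaC_smul, pdEllC_smul]
  ring

lemma pbC_smul_right (c : ℂ) (f g : ℝ × ℝ → ℂ) : pbC f (c • g) = c • pbC f g := by
  funext p
  simp only [pbC, Pi.smul_apply, smul_eq_mul, pdThetaC_smul, pdEllC_smul]
  ring

lemma pbC_zero_left (g : ℝ × ℝ → ℂ) : pbC 0 g = 0 := by
  funext p
  simp [pbC, pdThetaC_zero, pdEllC_zero]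

lemma pbC_zero_right (f : ℝ × ℝ → ℂ) : pbC f 0 = 0 := by
  funext p
  simp [pbC, pdThetaC_zero, pdEllC_zero]

lemma PC_lie : IsLieSubC PC := by
  intro f g hf hg
  induction hg using Submodule.span_induction with
  | mem x hx =>
    obtain ⟨s, n, rfl⟩ := hx
    induction hf using Submodule.span_induction with
    | mem y hy =>
      obtain ⟨r, m, rfl⟩ := hy
      rw [pbC_eC]
      exact Submodule.smul_mem _ _ (Submodule.subset_span ⟨r + s - 1, m + n, rfl⟩)
    | zero => rw [pbC_zero_left]; exact zero_mem _
    | add y z hy hz ihy ihz =>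
      rw [pbC_add_left _ (diffS_of_mem_PC hy) (diffS_of_mem_PC hz)]
      exact add_mem ihy ihz
    | smul c y hy ihy =>
      rw [pbC_smul_left]
      exact Submodule.smul_mem _ _ ihy
  | zero => rw [pbC_zero_right]; exact zero_mem _
  | add x y hx hy ihx ihy =>
    rw [pbC_add_right _ (diffS_of_mem_PC hx) (diffS_of_mem_PC hy)]
    exact add_mem ihx ihy
  | smul c x hx ihx =>
    rw [pbC_smul_right]
    exact Submodule.smul_mem _ _ ihx

lemma W_lie (α : ℝ) : IsLieSubC (W α) := by
  intro f g hf hg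
  rw [W, Submodule.mem_sInf] at *
  intro S hS
  exact hS.2.2 f g (hf S hS) (hg S hS)

lemma one_eq_eC : (fun _ : ℝ × ℝ => (1 : ℂ)) = eC 0 0 := by
  funext p; simp [eC]

lemma WGens_subset_PC (α : ℝ) : WGens α ⊆ PC := by
  rintro f (hf | ⟨N, rfl⟩)
  · rcases hf with rfl | rfl | rfl | rfl
    · rw [one_eq_eC]; exact Submodule.subset_span ⟨0, 0, rfl⟩
    · exact Submodule.subset_span ⟨0, 1, rfl⟩
    · exact Submodule.subset_span ⟨0, -1, rfl⟩
    · exact Submodule.subset_span ⟨1, 0, rfl⟩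
  · exact add_mem (Submodule.subset_span ⟨2, 2 * N + 1, rfl⟩)
      (Submodule.smul_mem _ _ (Submodule.subset_span ⟨1, 2 * N + 1, rfl⟩))

lemma W_le_PC (α : ℝ) : W α ≤ PC :=
  sInf_le ⟨le_refl _, WGens_subset_PC α, PC_lie⟩

/-- The reflection-symmetry submodule: `f(θ+π, −2α−ℓ) + f(θ,ℓ)` is constant
(equal to its value obtained from the base point `(0,−α)`). -/
def Tsym (α : ℝ) : Submodule ℂ (ℝ × ℝ → ℂ) where
  carrier := {f | ∀ p : ℝ × ℝ,
    f (p.1 + Real.pi, -(2 * α) - p.2) + f p = f (0, -α) + f (Real.pi, -α)}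
  add_mem' := by
    intro a b ha hb p
    simp only [Pi.add_apply]
    linear_combination ha p + hb p
  zero_mem' := by intro p; simp
  smul_mem' := by
    intro c a ha p
    simp only [Pi.smul_apply, smul_eq_mul]
    linear_combination c * ha p

lemma exp_odd_pi (k : ℤ) (hk : Odd k) :
    Complex.exp (Complex.I * (k : ℂ) * (Real.pi : ℂ)) = -1 := by
  rw [show Complex.I * (k : ℂ) * (Real.pi : ℂ) = (k : ℂ) * ((Real.pi : ℂ) * Complex.I) from by
    ring, Complex.exp_int_mul, Complex.exp_pi_mul_I]
  exact Odd.neg_one_zpow hk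

lemma eC_shift (r : ℕ) (m : ℤ) (x y : ℝ) :
    eC r m (x + Real.pi, y) = eC r m (x, y) * Complex.exp (Complex.I * (m : ℂ) * Real.pi) := by
  simp only [eC]
  rw [show Complex.I * (m : ℂ) * ((x + Real.pi : ℝ) : ℂ)
      = Complex.I * (m : ℂ) * (x : ℂ) + Complex.I * (m : ℂ) * (Real.pi : ℂ) from by
        push_cast; ring, Complex.exp_add]
  ring

lemma WGens_subset_Tsym (α : ℝ) : WGens α ⊆ Tsym α := by
  rintro f (hf | ⟨N, rfl⟩)
  · rcases hf with rfl | rfl | rfl | rfl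
    · intro p; norm_num
    · intro p
      simp only [eC, pow_zero, one_mul]
      rw [show Complex.I * ((1 : ℤ) : ℂ) * ((p.1 + Real.pi : ℝ) : ℂ)
          = Complex.I * ((1 : ℤ) : ℂ) * ((p.1 : ℝ) : ℂ)
            + Complex.I * ((1 : ℤ) : ℂ) * ((Real.pi : ℝ) : ℂ) from by push_cast; ring,
        Complex.exp_add,
        show Complex.I * ((1 : ℤ) : ℂ) * ((0 : ℝ) : ℂ) = 0 from by push_cast; ring,
        Complex.exp_zero, exp_odd_pi 1 ⟨0, by ring⟩]
      ring
    · intro p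
      simp only [eC, pow_zero, one_mul]
      rw [show Complex.I * ((-1 : ℤ) : ℂ) * ((p.1 + Real.pi : ℝ) : ℂ)
          = Complex.I * ((-1 : ℤ) : ℂ) * ((p.1 : ℝ) : ℂ)
            + Complex.I * ((-1 : ℤ) : ℂ) * ((Real.pi : ℝ) : ℂ) from by push_cast; ring,
        Complex.exp_add,
        show Complex.I * ((-1 : ℤ) : ℂ) * ((0 : ℝ) : ℂ) = 0 from by push_cast; ring,
        Complex.exp_zero, exp_odd_pi (-1) ⟨-1, by ring⟩]
      ring
    · intro p
      simp only [eC]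
      norm_num
      push_cast
      ring
  · intro p
    have hodd : Odd (2 * N + 1) := ⟨N, by ring⟩
    simp only [Pi.add_apply, Pi.smul_apply, smul_eq_mul, eC]
    rw [show Complex.I * ((2 * N + 1 : ℤ) : ℂ) * ((p.1 + Real.pi : ℝ) : ℂ)
        = Complex.I * ((2 * N + 1 : ℤ) : ℂ) * ((p.1 : ℝ) : ℂ)
          + Complex.I * ((2 * N + 1 : ℤ) : ℂ) * ((Real.pi : ℝ) : ℂ) from by push_cast; ring,
      Complex.exp_add,
      show Complex.I * ((2 * N + 1 : ℤ) : ℂ) * ((0 : ℝ) : ℂ) = 0 from by push_cast; ring,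
      Complex.exp_zero, exp_odd_pi _ hodd]
    push_cast
    ring

lemma pdThetaC_tau {α : ℝ} {f : ℝ × ℝ → ℂ} {c : ℂ}
    (hf : ∀ p : ℝ × ℝ, f (p.1 + Real.pi, -(2 * α) - p.2) = c - f p) (p : ℝ × ℝ) :
    pdThetaC f (p.1 + Real.pi, -(2 * α) - p.2) = - pdThetaC f p := by
  show deriv (fun t => f (t, -(2 * α) - p.2)) (p.1 + Real.pi) = _
  have heq : (fun t => f (t, -(2 * α) - p.2)) = fun t => c - f (t - Real.pi, p.2) := by
    funext t
    have h := hf (t - Real.pi, p.2)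
    simpa using h
  have h := deriv_comp_sub_const (fun t => f (t, p.2)) Real.pi (p.1 + Real.pi)
  simp only [add_sub_cancel_right] at h
  rw [heq, deriv_const_sub, h]
  rfl

lemma pdEllC_tau {α : ℝ} {f : ℝ × ℝ → ℂ} {c : ℂ}
    (hf : ∀ p : ℝ × ℝ, f (p.1 + Real.pi, -(2 * α) - p.2) = c - f p) (p : ℝ × ℝ) :
    pdEllC f (p.1 + Real.pi, -(2 * α) - p.2) = pdEllC f p := by
  show deriv (fun l => f (p.1 + Real.pi, l)) (-(2 * α) - p.2) = _
  have heq : (fun l => f (p.1 + Real.pi, l)) = fun l => c - f (p.1, -(2 * α) - l) := by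
    funext l
    have h := hf (p.1, -(2 * α) - l)
    simp only at h
    rw [show -(2 * α) - (-(2 * α) - l) = l from by ring] at h
    exact h
  have h := deriv_comp_const_sub (fun l => f (p.1, l)) (-(2 * α)) (-(2 * α) - p.2)
  rw [show -(2 * α) - (-(2 * α) - p.2) = p.2 from by ring] at h
  rw [heq, deriv_const_sub, h, neg_neg]
  rfl

lemma pbC_tau {α : ℝ} {f g : ℝ × ℝ → ℂ} {cf cg : ℂ}
    (hf : ∀ p : ℝ × ℝ, f (p.1 + Real.pi, -(2 * α) - p.2) = cf - f p)
    (hg : ∀ p : ℝ × ℝ, g (p.1 + Real.pi, -(2 * α) - p.2) = cg - g p) (p : ℝ × ℝ) :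
    pbC f g (p.1 + Real.pi, -(2 * α) - p.2) = - pbC f g p := by
  show pdEllC f (p.1 + Real.pi, -(2 * α) - p.2) * pdThetaC g (p.1 + Real.pi, -(2 * α) - p.2)
      - pdThetaC f (p.1 + Real.pi, -(2 * α) - p.2) * pdEllC g (p.1 + Real.pi, -(2 * α) - p.2) = _
  rw [pdEllC_tau hf, pdThetaC_tau hf, pdEllC_tau hg, pdThetaC_tau hg]
  simp only [pbC]
  ring

lemma mem_Tsym_iff {α : ℝ} {f : ℝ × ℝ → ℂ} : f ∈ Tsym α ↔ ∀ p : ℝ × ℝ,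
    f (p.1 + Real.pi, -(2 * α) - p.2) + f p = f (0, -α) + f (Real.pi, -α) := Iff.rfl

lemma W_le_Tsym (α : ℝ) : W α ≤ Tsym α := by
  have hmem : W α ⊓ Tsym α ∈ {S : Submodule ℂ (ℝ × ℝ → ℂ) | S ≤ PC ∧ WGens α ⊆ S ∧ IsLieSubC S} := by
    refine ⟨inf_le_left.trans (W_le_PC α), ?_, ?_⟩
    · intro h hh
      exact ⟨mem_W_of_mem_WGens hh, WGens_subset_Tsym α hh⟩
    · intro f g hf hg
      refine ⟨W_lie α f g hf.1 hg.1, ?_⟩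
      have hf' : ∀ p : ℝ × ℝ, f (p.1 + Real.pi, -(2 * α) - p.2)
          = (f (0, -α) + f (Real.pi, -α)) - f p := fun p => eq_sub_of_add_eq (hf.2 p)
      have hg' : ∀ p : ℝ × ℝ, g (p.1 + Real.pi, -(2 * α) - p.2)
          = (g (0, -α) + g (Real.pi, -α)) - g p := fun p => eq_sub_of_add_eq (hg.2 p)
      intro p
      have h1 := pbC_tau hf' hg' p
      have h2 := pbC_tau hf' hg' (0, -α)
      rw [show ((0 : ℝ), -α).1 + Real.pi = Real.pi from by simp,
        show -(2 * α) - ((0 : ℝ), (-α : ℝ)).2 = -α from by simp; ring] at h2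
      rw [h1, h2]
      ring
  have h1 : W α ≤ W α ⊓ Tsym α := sInf_le hmem
  exact h1.trans inf_le_right

/-- The key evaluation: real Poisson brackets of elements of `V α` are odd under the
reflection, in particular `pb f g (π, −α) = − pb f g (0, −α)`. -/
lemma pb_eval_V {α : ℝ} {f g : ℝ × ℝ → ℝ} (hf : f ∈ V α) (hg : g ∈ V α) :
    pb f g (Real.pi, -α) = - pb f g (0, -α) := by
  have hfW : cplx f ∈ Tsym α := W_le_Tsym α hf
  have hgW : cplx g ∈ Tsym α := W_le_Tsym α hg
  have hf' : ∀ p : ℝ × ℝ, cplx f (p.1 + Real.pi, -(2 * α) - p.2)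
      = (cplx f (0, -α) + cplx f (Real.pi, -α)) - cplx f p := fun p => eq_sub_of_add_eq (hfW p)
  have hg' : ∀ p : ℝ × ℝ, cplx g (p.1 + Real.pi, -(2 * α) - p.2)
      = (cplx g (0, -α) + cplx g (Real.pi, -α)) - cplx g p := fun p => eq_sub_of_add_eq (hgW p)
  have key := pbC_tau hf' hg' (0, -α)
  rw [show ((0 : ℝ), -α).1 + Real.pi = Real.pi from by simp,
    show -(2 * α) - ((0 : ℝ), (-α : ℝ)).2 = -α from by simp; ring] at key
  rw [← pbC_cplx] at key
  simp only [cplx] at key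
  exact_mod_cast key

def funA (α : ℝ) : ℝ × ℝ → ℝ := fun p => (p.2 ^ 2 + 2 * α * p.2) * Real.cos p.1
def funB (α : ℝ) : ℝ × ℝ → ℝ := fun p => (p.2 ^ 2 + 2 * α * p.2) * Real.sin p.1

lemma genW (α : ℝ) (N : ℤ) : eC 2 (2 * N + 1) + (2 * α : ℂ) • eC 1 (2 * N + 1) ∈ W α :=
  mem_W_of_mem_WGens (Or.inr ⟨N, rfl⟩)

lemma funA_mem_V (α : ℝ) : funA α ∈ V α := by
  show cplx (funA α) ∈ W α
  have h : cplx (funA α)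
      = ((1 : ℂ) / 2) • (eC 2 (2 * 0 + 1) + (2 * α : ℂ) • eC 1 (2 * 0 + 1))
        + ((1 : ℂ) / 2) • (eC 2 (2 * (-1) + 1) + (2 * α : ℂ) • eC 1 (2 * (-1) + 1)) := by
    funext p
    have h1 : Complex.I * (((2 * 0 + 1 : ℤ)) : ℂ) * (p.1 : ℂ) = (p.1 : ℂ) * Complex.I := by
      push_cast; ring
    have h2 : Complex.I * (((2 * (-1) + 1 : ℤ)) : ℂ) * (p.1 : ℂ) = -(p.1 : ℂ) * Complex.I := by
      push_cast; ring
    simp only [cplx, funA, eC, Pi.add_apply, Pi.smul_apply, smul_eq_mul, h1, h2,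
      Complex.ofReal_mul, Complex.ofReal_add, Complex.ofReal_pow, Complex.ofReal_ofNat,
      Complex.ofReal_cos]
    rw [Complex.cos]
    ring
  rw [h]
  exact add_mem (Submodule.smul_mem _ _ (genW α 0)) (Submodule.smul_mem _ _ (genW α (-1)))

lemma funB_mem_V (α : ℝ) : funB α ∈ V α := by
  show cplx (funB α) ∈ W α
  have h : cplx (funB α)
      = (Complex.I / 2) • (eC 2 (2 * (-1) + 1) + (2 * α : ℂ) • eC 1 (2 * (-1) + 1))
        - (Complex.I / 2) • (eC 2 (2 * 0 + 1) + (2 * α : ℂ) • eC 1 (2 * 0 + 1)) := by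
    funext p
    have h1 : Complex.I * (((2 * 0 + 1 : ℤ)) : ℂ) * (p.1 : ℂ) = (p.1 : ℂ) * Complex.I := by
      push_cast; ring
    have h2 : Complex.I * (((2 * (-1) + 1 : ℤ)) : ℂ) * (p.1 : ℂ) = -(p.1 : ℂ) * Complex.I := by
      push_cast; ring
    simp only [cplx, funB, eC, Pi.sub_apply, Pi.add_apply, Pi.smul_apply, smul_eq_mul, h1, h2,
      Complex.ofReal_mul, Complex.ofReal_add, Complex.ofReal_pow, Complex.ofReal_ofNat,
      Complex.ofReal_sin]
    rw [Complex.sin]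
    ring
  rw [h]
  exact sub_mem (Submodule.smul_mem _ _ (genW α (-1))) (Submodule.smul_mem _ _ (genW α 0))

lemma pb_funA_fsin (α : ℝ) :
    pb (funA α) fsin = fun p => (2 * p.2 + 2 * α) * Real.cos p.1 ^ 2 := by
  funext p
  have hEll : pdEll (funA α) p = (2 * p.2 + 2 * α) * Real.cos p.1 := by
    have h : HasDerivAt (fun l : ℝ => (l ^ 2 + 2 * α * l) * Real.cos p.1)
        ((2 * p.2 ^ 1 + 2 * α * 1) * Real.cos p.1) p.2 := by
      exact (((hasDerivAt_pow 2 p.2).add ((hasDerivAt_id p.2).const_mul (2 * α))).mul_const _)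
    have := h.deriv
    simp only [pdEll, funA]
    rw [this]
    ring
  have hTheta : pdTheta (funA α) p = (p.2 ^ 2 + 2 * α * p.2) * (-Real.sin p.1) := by
    have h : HasDerivAt (fun t : ℝ => (p.2 ^ 2 + 2 * α * p.2) * Real.cos t)
        ((p.2 ^ 2 + 2 * α * p.2) * (-Real.sin p.1)) p.1 := by
      simpa [mul_comm] using (Real.hasDerivAt_cos p.1).const_mul (p.2 ^ 2 + 2 * α * p.2)
    exact h.deriv
  have hsT : pdTheta fsin p = Real.cos p.1 := by
    simp [pdTheta, fsin, Real.deriv_sin]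
  have hsE : pdEll fsin p = 0 := by
    simp [pdEll, fsin]
  simp only [pb, hEll, hTheta, hsT, hsE]
  ring

lemma pb_funB_fcos (α : ℝ) :
    pb (funB α) fcos = fun p => -((2 * p.2 + 2 * α) * Real.sin p.1 ^ 2) := by
  funext p
  have hEll : pdEll (funB α) p = (2 * p.2 + 2 * α) * Real.sin p.1 := by
    have h : HasDerivAt (fun l : ℝ => (l ^ 2 + 2 * α * l) * Real.sin p.1)
        ((2 * p.2 ^ 1 + 2 * α * 1) * Real.sin p.1) p.2 := by
      exact (((hasDerivAt_pow 2 p.2).add ((hasDerivAt_id p.2).const_mul (2 * α))).mul_const _)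
    have := h.deriv
    simp only [pdEll, funB]
    rw [this]
    ring
  have hTheta : pdTheta (funB α) p = (p.2 ^ 2 + 2 * α * p.2) * Real.cos p.1 := by
    have h : HasDerivAt (fun t : ℝ => (p.2 ^ 2 + 2 * α * p.2) * Real.sin t)
        ((p.2 ^ 2 + 2 * α * p.2) * Real.cos p.1) p.1 := by
      simpa [mul_comm] using (Real.hasDerivAt_sin p.1).const_mul (p.2 ^ 2 + 2 * α * p.2)
    exact h.deriv
  have hcT : pdTheta fcos p = -Real.sin p.1 := by
    simp [pdTheta, fcos, Real.deriv_cos]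
  have hcE : pdEll fcos p = 0 := by
    simp [pdEll, fcos]
  simp only [pb, hEll, hTheta, hcT, hcE]
  ring

lemma pb_mem_V {α : ℝ} {f g : ℝ × ℝ → ℝ} (hf : f ∈ V α) (hg : g ∈ V α) :
    pb f g ∈ V α := by
  show cplx (pb f g) ∈ W α
  rw [pbC_cplx]
  exact W_lie α _ _ hf hg
def Qlin (α : ℝ) : V α →ₗ[ℝ] ℝ where
  toFun f := ((f : ℝ × ℝ → ℝ) (0, -α) + (f : ℝ × ℝ → ℝ) (Real.pi, -α)) / 2
  map_add' f g := by
    simp only [Submodule.coe_add, Pi.add_apply]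
    ring
  map_smul' c f := by
    simp only [SetLike.val_smul, Pi.smul_apply, smul_eq_mul, RingHom.id_apply]
    ring

/-- Trivial (one-dimensional) quantizations of `V_α`: every ℝ-linear functional on `V_α`
sending `1 ↦ 1` and all Poisson brackets to `0` sends `ℓ ↦ −α`; and such a functional
exists, with moreover `sin θ ↦ 0`, `cos θ ↦ 0` and `bℓ + c ↦ c − αb`. -/
theorem stmt16 (α : ℝ) :
    (∀ Q : V α →ₗ[ℝ] ℝ,
      Q ⟨fone, fone_mem_V α⟩ = 1 →
      (∀ (f g : V α) (h : pb f g ∈ V α), Q ⟨pb f g, h⟩ = 0) →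
      Q ⟨fell, fell_mem_V α⟩ = -α) ∧
    ∃ Q : V α →ₗ[ℝ] ℝ,
      Q ⟨fone, fone_mem_V α⟩ = 1 ∧
      (∀ (f g : V α) (h : pb f g ∈ V α), Q ⟨pb f g, h⟩ = 0) ∧
      Q ⟨fsin, fsin_mem_V α⟩ = 0 ∧ Q ⟨fcos, fcos_mem_V α⟩ = 0 ∧
      ∀ (b c : ℝ) (h : (fun p : ℝ × ℝ => b * p.2 + c) ∈ V α),
        Q ⟨fun p : ℝ × ℝ => b * p.2 + c, h⟩ = c - α * b := by
  constructor
  · intro Q hone hbr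
    have h1 : pb (funA α) fsin ∈ V α := pb_mem_V (funA_mem_V α) (fsin_mem_V α)
    have h2 : pb (funB α) fcos ∈ V α := pb_mem_V (funB_mem_V α) (fcos_mem_V α)
    have e1 : Q ⟨pb (funA α) fsin, h1⟩ = 0 :=
      hbr ⟨funA α, funA_mem_V α⟩ ⟨fsin, fsin_mem_V α⟩ h1
    have e2 : Q ⟨pb (funB α) fcos, h2⟩ = 0 :=
      hbr ⟨funB α, funB_mem_V α⟩ ⟨fcos, fcos_mem_V α⟩ h2
    have key : (⟨pb (funA α) fsin, h1⟩ : V α)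
        = (2 : ℝ) • (⟨fell, fell_mem_V α⟩ : V α) + (2 * α) • (⟨fone, fone_mem_V α⟩ : V α)
          + (⟨pb (funB α) fcos, h2⟩ : V α) := by
      apply Subtype.ext
      simp only [Submodule.coe_add, SetLike.val_smul]
      rw [pb_funA_fsin, pb_funB_fcos]
      funext p
      simp only [Pi.add_apply, Pi.smul_apply, smul_eq_mul, fell, fone]
      linear_combination (2 * p.2 + 2 * α) * (Real.sin_sq_add_cos_sq p.1)
    have hQ := congrArg Q key
    rw [e1, map_add, map_add, map_smul, map_smul, e2, hone] at hQ
    simp only [smul_eq_mul, mul_one, add_zero] at hQ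
    linarith
  · refine ⟨Qlin α, ?_, ?_, ?_, ?_, ?_⟩
    · show (fone (0, -α) + fone (Real.pi, -α)) / 2 = 1
      norm_num [fone]
    · intro f g h
      show (pb (f : ℝ × ℝ → ℝ) (g : ℝ × ℝ → ℝ) (0, -α)
          + pb (f : ℝ × ℝ → ℝ) (g : ℝ × ℝ → ℝ) (Real.pi, -α)) / 2 = 0
      rw [pb_eval_V f.2 g.2]
      ring
    · show (fsin (0, -α) + fsin (Real.pi, -α)) / 2 = 0
      norm_num [fsin, Real.sin_pi]
    · show (fcos (0, -α) + fcos (Real.pi, -α)) / 2 = 0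
      norm_num [fcos, Real.cos_pi]
    · intro b c h
      show ((b * (0, -α).2 + c) + (b * (Real.pi, -α).2 + c)) / 2 = c - α * b
      norm_num
      ring
end
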